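/- arXiv:1809.06720 — 3 statements merged into one kernel-verified Lean document; each statement's English description precedes it below -/
import Mathlib

section
/- Let G be a group, H a subgroup of G, and i ≤ j natural numbers. Then Z_i(E_i(H)) ≤ Z_j(E_j(H)). -/
open scoped commutatorElement

/-- Iterated centralizer `C_S^k(A)` of the subset `A` inside the ambient (sub)group
given by the set `S`, following Bryant: `C^0 = {1}` and
`C^{k+1}(A) = {x ∈ ⋂_{n ≤ k} N_S(C^n(A)) | [x, a] ∈ C^k(A) for all a ∈ A}`. -/
def iterCent {G : Type*} [Group G] (S A : Set G) : ℕ → Set G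
  | 0 => {1}
  | k + 1 =>
    {x | x ∈ S ∧
      (∀ n, n ≤ k → ∀ h ∈ S, (x * h * x⁻¹ ∈ iterCent S A n ↔ h ∈ iterCent S A n)) ∧
      ∀ a ∈ A, ⁅x, a⁆ ∈ iterCent S A k}
  termination_by n => n
  decreasing_by all_goals omega

/-- The `E_k`-envelopes of a subgroup (given as the set `H`) in `G`:
`E_0(H) = G` and `E_{k+1}(H) = {g ∈ E_k(H) | [g, C_{E_k(H)}^{k+1}(H)] ⊆ C_{E_k(H)}^k(H)}`. -/
def env {G : Type*} [Group G] (H : Set G) : ℕ → Set G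
  | 0 => Set.univ
  | k + 1 =>
    {g | g ∈ env H k ∧
      ∀ c ∈ iterCent (env H k) H (k + 1), ⁅g, c⁆ ∈ iterCent (env H k) H k}

/-- The upper central series `Z_k` of the (sub)group given by the set `S`:
`Z_0 = {1}` and `Z_{k+1} = {x ∈ S | [x, g] ∈ Z_k for all g ∈ S}`. -/
def upperCent {G : Type*} [Group G] (S : Set G) : ℕ → Set G
  | 0 => {1}
  | k + 1 => {x | x ∈ S ∧ ∀ g ∈ S, ⁅x, g⁆ ∈ upperCent S k}

/-! By induction on `k`, each `E_k(A)` is a subgroup containing `A` and normalizing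
`C^n_{E_k}(A)` for every `n ≤ k`. In the inductive step, `E_{k+1}` normalizes `C^{k+1}_{E_k}`
because `g c g⁻¹ = [g, c] c` with `[g, c] ∈ C^k ⊆ C^{k+1}`, and `C^n_{E_{k+1}} = C^n_{E_k} ∩ E_{k+1}`
for `n ≤ k + 1`. Consequently `Z_k(E_k) ⊆ C^k_{E_k}(A) ⊆ E_{k+1}`, whence
`Z_k(E_k) ⊆ Z_k(E_{k+1}) ⊆ Z_{k+1}(E_{k+1})`. -/

open Subgroup

section

variable {G : Type*} [Group G]

section IterCent

variable {K : Subgroup G} {A : Set G} {x : G} {k : ℕ}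

theorem mem_iterCent_zero {S : Set G} : x ∈ iterCent S A 0 ↔ x = 1 := by
  rw [iterCent]; rfl

theorem iterCent_subset (n : ℕ) : iterCent K A n ⊆ K := by
  intro x hx
  cases n with
  | zero => rw [mem_iterCent_zero.1 hx]; exact K.one_mem
  | succ n => rw [iterCent] at hx; exact hx.1

theorem forall_conj_mem_iff_mem_normalizer {C : Set G} (hC : C ⊆ K) (hx : x ∈ K) :
    (∀ h ∈ K, (x * h * x⁻¹ ∈ C ↔ h ∈ C)) ↔ x ∈ normalizer C := by
  rw [mem_set_normalizer_iff]
  refine ⟨fun hN h => ?_, fun hN h _ => (hN h).symm⟩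
  by_cases hh : h ∈ K
  · exact (hN h hh).symm
  · refine iff_of_false (fun h' => hh (hC h')) (fun h' => hh ?_)
    exact (K.mul_mem_cancel_left hx).1 ((K.mul_mem_cancel_right (K.inv_mem hx)).1 (hC h'))

theorem mem_iterCent_succ :
    x ∈ iterCent K A (k + 1) ↔ x ∈ K ∧ (∀ n ≤ k, x ∈ normalizer (iterCent K A n)) ∧
      ∀ a ∈ A, ⁅x, a⁆ ∈ iterCent K A k := by
  rw [iterCent, Set.mem_ofPred_eq]
  exact and_congr_right fun hx => and_congr_left' <|
    forall₂_congr fun n _ => forall_conj_mem_iff_mem_normalizer (iterCent_subset n) hx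

theorem one_mem_iterCent (n : ℕ) : (1 : G) ∈ iterCent K A n := by
  induction n with
  | zero => exact mem_iterCent_zero.2 rfl
  | succ n ih =>
    exact mem_iterCent_succ.2 ⟨K.one_mem, fun _ _ => one_mem _, fun a _ => by
      rwa [commutatorElement_one_left]⟩

theorem inv_mem_iterCent {n : ℕ} (hx : x ∈ iterCent K A n) : x⁻¹ ∈ iterCent K A n := by
  induction n generalizing x with
  | zero => rw [mem_iterCent_zero] at hx ⊢; rw [hx, inv_one]
  | succ n ih =>
    obtain ⟨hxK, hxN, hxA⟩ := mem_iterCent_succ.1 hx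
    refine mem_iterCent_succ.2 ⟨K.inv_mem hxK, fun m hm => inv_mem (hxN m hm), fun a ha => ?_⟩
    rw [commutatorElement_inv_left, ← commutatorElement_inv]
    exact (mem_set_normalizer_iff''.1 (hxN n le_rfl) _).1 (ih (hxA a ha))

theorem mul_mem_iterCent {n : ℕ} {y : G} (hx : x ∈ iterCent K A n) (hy : y ∈ iterCent K A n) :
    x * y ∈ iterCent K A n := by
  induction n generalizing x y with
  | zero => rw [mem_iterCent_zero] at hx hy ⊢; rw [hx, hy, one_mul]
  | succ n ih =>
    obtain ⟨hxK, hxN, hxA⟩ := mem_iterCent_succ.1 hx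
    obtain ⟨hyK, hyN, hyA⟩ := mem_iterCent_succ.1 hy
    refine mem_iterCent_succ.2
      ⟨K.mul_mem hxK hyK, fun m hm => mul_mem (hxN m hm) (hyN m hm), fun a ha => ?_⟩
    rw [commutatorElement_mul_left_eq_conj_mul]
    exact ih ((mem_set_normalizer_iff.1 (hxN n le_rfl) _).1 (hyA a ha)) (hxA a ha)

variable (K A) in
def iterCentSubgroup (n : ℕ) : Subgroup G where
  carrier := iterCent K A n
  one_mem' := one_mem_iterCent n
  mul_mem' := mul_mem_iterCent
  inv_mem' := inv_mem_iterCent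

theorem iterCent_subset_succ (n : ℕ) : iterCent K A n ⊆ iterCent K A (n + 1) := by
  induction n with
  | zero => intro x hx; rw [mem_iterCent_zero.1 hx]; exact one_mem_iterCent 1
  | succ n ih =>
    intro x hx
    obtain ⟨hxK, hxN, hxA⟩ := mem_iterCent_succ.1 hx
    refine mem_iterCent_succ.2 ⟨hxK, fun m hm => ?_, fun a ha => ih (hxA a ha)⟩
    rcases hm.lt_or_eq with hm | rfl
    · exact hxN m (Nat.lt_succ_iff.1 hm)
    · exact (iterCentSubgroup K A (n + 1)).le_normalizer hx

end IterCent

section EnvSucc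

variable (K : Subgroup G) (A : Set G) (k : ℕ) (hK : K ≤ normalizer (iterCent K A k))

def envSuccSubgroup : Subgroup G where
  carrier := {g | g ∈ K ∧ ∀ c ∈ iterCent K A (k + 1), ⁅g, c⁆ ∈ iterCent K A k}
  one_mem' := ⟨K.one_mem, fun c _ => by
    rw [commutatorElement_one_left]; exact one_mem_iterCent k⟩
  mul_mem' := by
    rintro x y ⟨hx, hxc⟩ ⟨hy, hyc⟩
    refine ⟨K.mul_mem hx hy, fun c hc => ?_⟩
    rw [commutatorElement_mul_left_eq_conj_mul]
    exact mul_mem_iterCent ((mem_set_normalizer_iff.1 (hK hx) _).1 (hyc c hc)) (hxc c hc)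
  inv_mem' := by
    rintro x ⟨hx, hxc⟩
    refine ⟨K.inv_mem hx, fun c hc => ?_⟩
    rw [commutatorElement_inv_left, ← commutatorElement_inv]
    exact (mem_set_normalizer_iff''.1 (hK hx) _).1 (inv_mem_iterCent (hxc c hc))

theorem coe_envSuccSubgroup (h : (K : Set G) = env A k) :
    (envSuccSubgroup K A k hK : Set G) = env A (k + 1) := by
  rw [env, ← h]; rfl

theorem envSuccSubgroup_le : envSuccSubgroup K A k hK ≤ K := fun _ hg => hg.1

variable {K A}

theorem subset_envSuccSubgroup (hA : A ⊆ K) : A ⊆ envSuccSubgroup K A k hK := fun a ha =>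
  ⟨hA ha, fun c hc => by
    rw [← commutatorElement_inv]
    exact inv_mem_iterCent ((mem_iterCent_succ.1 hc).2.2 a ha)⟩

theorem iterCent_subset_envSuccSubgroup : iterCent K A k ⊆ envSuccSubgroup K A k hK :=
  fun x hx => ⟨iterCent_subset k hx, fun c hc => by
    rw [show ⁅x, c⁆ = x * (c * x⁻¹ * c⁻¹) by group]
    have hcN := (mem_iterCent_succ.1 hc).2.1 k le_rfl
    exact mul_mem_iterCent hx ((mem_set_normalizer_iff.1 hcN _).1 (inv_mem_iterCent hx))⟩

theorem envSuccSubgroup_le_normalizer_iterCent_succ :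
    envSuccSubgroup K A k hK ≤ normalizer (iterCent K A (k + 1)) := by
  refine le_set_normalizer_iff.2 fun g hg c hc => ?_
  rw [show g * c * g⁻¹ = ⁅g, c⁆ * c by group]
  exact mul_mem_iterCent (iterCent_subset_succ k (hg.2 c hc)) hc

end EnvSucc

theorem commutatorElement_mem {T : Subgroup G} {x y : G} (hx : x ∈ T) (hy : y ∈ T) :
    ⁅x, y⁆ ∈ T := by
  rw [commutatorElement_def]
  exact T.mul_mem (T.mul_mem (T.mul_mem hx hy) (T.inv_mem hx)) (T.inv_mem hy)

theorem iterCent_eq_inter_of_le {A : Set G} {S T : Subgroup G} (hTS : T ≤ S) (hA : A ⊆ T)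
    {N : ℕ} (hN : ∀ n < N, T ≤ normalizer (iterCent S A n)) (n : ℕ) (hn : n ≤ N) :
    iterCent T A n = iterCent S A n ∩ T := by
  induction n using Nat.strong_induction_on with
  | _ n ih =>
    ext x
    rcases n with _ | n
    · rw [Set.mem_inter_iff, mem_iterCent_zero, mem_iterCent_zero]
      exact ⟨fun h => ⟨h, h ▸ T.one_mem⟩, And.left⟩
    rw [Set.mem_inter_iff, mem_iterCent_succ, mem_iterCent_succ]
    constructor
    · rintro ⟨hxT, -, hxA⟩
      rw [ih n (by omega) (by omega)] at hxA
      exact ⟨⟨hTS hxT, fun m hm => hN m (by omega) hxT, fun a ha => (hxA a ha).1⟩, hxT⟩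
    · rintro ⟨⟨-, hxN, hxA⟩, hxT⟩
      refine ⟨hxT, fun m hm => ?_, fun a ha => ?_⟩
      · rw [ih m (by omega) (by omega)]
        exact inf_normalizer_le_normalizer_inf (H := iterCentSubgroup S A m) (K := T)
          ⟨hxN m hm, T.le_normalizer hxT⟩
      · rw [ih n (by omega) (by omega)]
        exact ⟨hxA a ha, commutatorElement_mem hxT (hA ha)⟩

theorem exists_subgroup_eq_env (A : Set G) (k : ℕ) :
    ∃ K : Subgroup G, (K : Set G) = env A k ∧ A ⊆ K ∧
      ∀ n ≤ k, K ≤ normalizer (iterCent K A n) := by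
  induction k with
  | zero =>
    refine ⟨⊤, by rw [env, coe_top], fun a _ => mem_top a, fun n hn => ?_⟩
    rw [Nat.le_zero.1 hn]
    refine le_set_normalizer_iff.2 fun g _ c hc => ?_
    rw [mem_iterCent_zero] at hc ⊢
    rw [hc, mul_one, mul_inv_cancel]
  | succ k ih =>
    obtain ⟨K, hK, hA, hN⟩ := ih
    set E := envSuccSubgroup K A k (hN k le_rfl)
    have hEK : E ≤ K := envSuccSubgroup_le K A k _
    have hAE : A ⊆ E := subset_envSuccSubgroup k _ hA
    have hEN : ∀ m ≤ k + 1, E ≤ normalizer (iterCent K A m) := by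
      intro m hm
      rcases hm.lt_or_eq with hm | rfl
      · exact hEK.trans (hN m (Nat.lt_succ_iff.1 hm))
      · exact envSuccSubgroup_le_normalizer_iterCent_succ k _
    refine ⟨E, coe_envSuccSubgroup K A k _ hK, hAE, fun n hn => ?_⟩
    rw [iterCent_eq_inter_of_le hEK hAE (fun m hm => hEN m hm.le) n hn]
    exact (le_inf (hEN n hn) E.le_normalizer).trans
      (inf_normalizer_le_normalizer_inf (H := iterCentSubgroup K A n))

section UpperCent

variable {K T : Subgroup G} {x : G}

theorem mem_upperCent_zero {S : Set G} : x ∈ upperCent S 0 ↔ x = 1 := Iff.rfl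

theorem mem_upperCent_succ {S : Set G} {m : ℕ} :
    x ∈ upperCent S (m + 1) ↔ x ∈ S ∧ ∀ g ∈ S, ⁅x, g⁆ ∈ upperCent S m := Iff.rfl

theorem upperCent_subset_succ (m : ℕ) :
    upperCent (K : Set G) m ⊆ upperCent (K : Set G) (m + 1) := by
  induction m with
  | zero =>
    intro x hx
    rw [mem_upperCent_zero.1 hx]
    exact ⟨K.one_mem, fun g _ => by rw [commutatorElement_one_left]; rfl⟩
  | succ m ih => exact fun x hx => ⟨hx.1, fun g hg => ih (hx.2 g hg)⟩

theorem upperCent_subset_upperCent_of_le (hTK : T ≤ K) {m : ℕ}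
    (h : upperCent (K : Set G) m ⊆ T) :
    upperCent (K : Set G) m ⊆ upperCent (T : Set G) m := by
  induction m with
  | zero => exact subset_rfl
  | succ m ih =>
    intro x hx
    exact ⟨h hx, fun g hg => ih ((upperCent_subset_succ m).trans h) (hx.2 g (hTK hg))⟩

theorem upperCent_subset_iterCent {A : Set G} (hA : A ⊆ K) {m : ℕ}
    (hN : ∀ n < m, K ≤ normalizer (iterCent K A n)) :
    upperCent (K : Set G) m ⊆ iterCent K A m := by
  induction m with
  | zero => exact fun x hx => mem_iterCent_zero.2 (mem_upperCent_zero.1 hx)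
  | succ m ih =>
    intro x hx
    obtain ⟨hxK, hxc⟩ := mem_upperCent_succ.1 hx
    exact mem_iterCent_succ.2 ⟨hxK, fun n hn => hN n (Nat.lt_succ_of_le hn) hxK,
      fun a ha => ih (fun n hn => hN n (Nat.lt_succ_of_lt hn)) (hxc a (hA ha))⟩

end UpperCent

theorem upperCent_env_subset_succ (A : Set G) (k : ℕ) :
    upperCent (env A k) k ⊆ upperCent (env A (k + 1)) (k + 1) := by
  obtain ⟨K, hK, hA, hN⟩ := exists_subgroup_eq_env A k
  set E := envSuccSubgroup K A k (hN k le_rfl)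
  rw [← hK, ← coe_envSuccSubgroup K A k (hN k le_rfl) hK]
  have hZE : upperCent (K : Set G) k ⊆ E :=
    (upperCent_subset_iterCent hA fun n hn => hN n hn.le).trans
      (iterCent_subset_envSuccSubgroup k _)
  exact (upperCent_subset_upperCent_of_le (envSuccSubgroup_le K A k _) hZE).trans
    (upperCent_subset_succ k)

end

/-- For `i ≤ j`, `Z_i(E_i(H)) ≤ Z_j(E_j(H))`. -/
theorem upperCent_env_mono {G : Type*} [Group G] (H : Subgroup G) (i j : ℕ) (hij : i ≤ j) :
    upperCent (env (H : Set G) i) i ⊆ upperCent (env (H : Set G) j) j := by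
  induction j, hij using Nat.le_induction with
  | base => exact subset_rfl
  | succ j _ ih => exact ih.trans (upperCent_env_subset_succ (H : Set G) j)
end

section
/- Let G be a group, H a subgroup of G, and i ≤ k natural numbers. Then C_{E_k(H)}^{i+1}(H) = {x ∈ E_k(H) : [x,h] ∈ Z_i(E_k(H)) for all h ∈ H}. -/
open scoped commutatorElement

/-!
By induction on `k`, each `E_k(H)` is a subgroup containing `H` in which `C^n(H) = Z_n` for all
`n ≤ k`. Once the lower iterated centralizers are upper central terms, which are normal, the
normalizer condition in the definition of `C^{i+1}(H)` is automatic; this gives the theorem.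

For the step, `E_{k+1}` is the preimage of the centralizer of `C^{k+1}_{E_k}(H)` modulo
`Z_k(E_k)`, hence a subgroup. An element `x` of `C^{n+1}_{E_{k+1}}(H)`, `n ≤ k`, lies in
`C^{n+1}_{E_k}(H)`: for `n < k` this is `Z_{n+1}(E_k)`, and for `n = k` the group `E_{k+1}`
centralizes it modulo `Z_k(E_k)`. Either way the commutators of `x` with `E_{k+1}` lie in
`Z_n(E_k) ∩ E_{k+1} ⊆ Z_n(E_{k+1})`.
-/

namespace Subgroup

variable {G : Type*} [Group G]

theorem upperCent_eq_map (K : Subgroup G) (n : ℕ) :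
    upperCent (K : Set G) n = (upperCentralSeries K n).map K.subtype := by
  induction n with
  | zero => simp [upperCent]
  | succ n ih =>
    ext x
    simp only [upperCent, ih, SetLike.mem_coe, mem_map, coe_subtype, Set.mem_ofPred_eq,
      mem_upperCentralSeries_succ_iff]
    constructor
    · rintro ⟨hx, hcomm⟩
      refine ⟨⟨x, hx⟩, fun y => ?_, rfl⟩
      obtain ⟨z, hz, hzx⟩ := hcomm y y.2
      rwa [show z = ⁅(⟨x, hx⟩ : K), y⁆ from Subtype.ext hzx] at hz
    · rintro ⟨x, hx, rfl⟩
      exact ⟨x.2, fun g hg => ⟨_, hx ⟨g, hg⟩, rfl⟩⟩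

theorem le_normalizer_map_subtype (K : Subgroup G) (N : Subgroup K) [N.Normal] :
    K ≤ normalizer (N.map K.subtype : Set G) :=
  (normal_subgroupOf_iff_le_normalizer (map_subtype_le N)).mp <| by
    rwa [subgroupOf, comap_map_eq_self_of_injective K.subtype_injective]

theorem conj_mem_upperCent_iff {K : Subgroup G} {g : G} (hg : g ∈ K) (n : ℕ) (x : G) :
    g * x * g⁻¹ ∈ upperCent (K : Set G) n ↔ x ∈ upperCent (K : Set G) n := by
  rw [upperCent_eq_map]
  exact (mem_normalizer_iff.mp (le_normalizer_map_subtype K _ hg) x).symm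

theorem commutatorElement_mem_upperCent_comm {K : Subgroup G} {n : ℕ} {x y : G}
    (h : ⁅x, y⁆ ∈ upperCent (K : Set G) n) : ⁅y, x⁆ ∈ upperCent (K : Set G) n := by
  rw [upperCent_eq_map] at h ⊢
  simpa using inv_mem h

theorem upperCent_inter_subset {K K' : Subgroup G} (hK' : K' ≤ K) :
    ∀ n, upperCent (K : Set G) n ∩ K' ⊆ upperCent (K' : Set G) n
  | 0 => Set.inter_subset_left
  | n + 1 => fun x ⟨hx, hxK'⟩ =>
    ⟨hxK', fun g hg => upperCent_inter_subset hK' n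
      ⟨hx.2 g (hK' hg), (⁅(⟨x, hxK'⟩ : K'), ⟨g, hg⟩⁆ : K').2⟩⟩

def centralizerMod (K N : Subgroup G) (hKN : K ≤ normalizer (N : Set G)) (S : Set G) :
    Subgroup G where
  carrier := {g | g ∈ K ∧ ∀ c ∈ S, ⁅g, c⁆ ∈ N}
  one_mem' := ⟨K.one_mem, fun c _ => by simp [N.one_mem]⟩
  mul_mem' := fun {a b} ⟨ha, haS⟩ ⟨hb, hbS⟩ => ⟨K.mul_mem ha hb, fun c hc => by
    rw [commutatorElement_mul_left_eq_conj_mul]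
    exact N.mul_mem ((mem_normalizer_iff.mp (hKN ha) _).mp (hbS c hc)) (haS c hc)⟩
  inv_mem' := fun {a} ⟨ha, haS⟩ => ⟨K.inv_mem ha, fun c hc => by
    rw [commutatorElement_inv_left, ← commutatorElement_inv]
    simpa using (mem_normalizer_iff.mp (hKN (K.inv_mem ha)) _).mp (N.inv_mem (haS c hc))⟩

end Subgroup

section

open Subgroup

variable {G : Type*} [Group G]

theorem iterCent_succ_eq_of_forall_le (K : Subgroup G) (A : Set G) {i : ℕ}
    (hC : ∀ m ≤ i, iterCent (K : Set G) A m = upperCent (K : Set G) m) :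
    iterCent (K : Set G) A (i + 1) = {x | x ∈ K ∧ ∀ a ∈ A, ⁅x, a⁆ ∈ upperCent (K : Set G) i} := by
  ext x
  rw [iterCent]
  constructor
  · rintro ⟨hx, -, hxA⟩
    exact ⟨hx, fun a ha => hC i le_rfl ▸ hxA a ha⟩
  · rintro ⟨hx, hxA⟩
    refine ⟨hx, fun m hm y _ => ?_, fun a ha => hC i le_rfl ▸ hxA a ha⟩
    rw [hC m hm]
    exact conj_mem_upperCent_iff hx m y

theorem iterCent_eq_upperCent_of_le (H : Subgroup G) {E E' : Subgroup G} {k : ℕ}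
    (hC : ∀ n ≤ k, iterCent (E : Set G) H n = upperCent (E : Set G) n)
    (hE'E : E' ≤ E) (hHE' : H ≤ E')
    (hE' : ∀ g ∈ E', ∀ c ∈ iterCent (E : Set G) H (k + 1), ⁅g, c⁆ ∈ upperCent (E : Set G) k) :
    ∀ n ≤ k + 1, iterCent (E' : Set G) H n = upperCent (E' : Set G) n ∧
      iterCent (E' : Set G) H n ⊆ iterCent (E : Set G) H n := by
  intro n hn
  induction n using Nat.strong_induction_on with | _ n ih => ?_
  obtain _ | n := n
  · simp [iterCent, upperCent]
  rw [iterCent_succ_eq_of_forall_le E' H fun m hm => (ih m (by omega) (by omega)).1]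
  have hsub : {x | x ∈ E' ∧ ∀ h ∈ H, ⁅x, h⁆ ∈ upperCent (E' : Set G) n} ⊆
      iterCent (E : Set G) H (n + 1) := by
    rw [iterCent_succ_eq_of_forall_le E H fun m hm => hC m (by omega), ← hC n (by omega)]
    rintro x ⟨hx, hxH⟩
    refine ⟨hE'E hx, fun h hh => (ih n (by omega) (by omega)).2 ?_⟩
    rw [(ih n (by omega) (by omega)).1]
    exact hxH h hh
  refine ⟨subset_antisymm ?_ ?_, hsub⟩
  · intro x hx
    refine ⟨hx.1, fun g hg => ?_⟩
    have hxE := hsub hx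
    refine upperCent_inter_subset hE'E n ⟨?_, (⁅(⟨x, hx.1⟩ : E'), ⟨g, hg⟩⁆ : E').2⟩
    rcases (show n < k ∨ n = k by omega) with hnk | rfl
    · rw [hC (n + 1) (by omega)] at hxE
      exact hxE.2 g (hE'E hg)
    · exact commutatorElement_mem_upperCent_comm (hE' g hg x hxE)
  · exact fun x ⟨hx, hxE'⟩ => ⟨hx, fun h hh => hxE' h (hHE' hh)⟩

theorem exists_subgroup_env (H : Subgroup G) : ∀ k, ∃ E : Subgroup G,
    (E : Set G) = env (H : Set G) k ∧ H ≤ E ∧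
      ∀ n ≤ k, iterCent (E : Set G) H n = upperCent (E : Set G) n
  | 0 => ⟨⊤, by simp [env], le_top, fun n hn => by
      obtain rfl : n = 0 := by omega
      simp [iterCent, upperCent]⟩
  | k + 1 => by
    obtain ⟨E, hE, hHE, hC⟩ := exists_subgroup_env H k
    let E' := centralizerMod E _ (le_normalizer_map_subtype E (Subgroup.upperCentralSeries E k))
      (iterCent (E : Set G) H (k + 1))
    have hE'E : E' ≤ E := fun g hg => hg.1
    have hE' : ∀ g ∈ E', ∀ c ∈ iterCent (E : Set G) H (k + 1),
        ⁅g, c⁆ ∈ upperCent (E : Set G) k := by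
      rw [upperCent_eq_map]; exact fun g hg => hg.2
    have hHE' : H ≤ E' := fun h hh => ⟨hHE hh, fun c hc => by
      rw [iterCent_succ_eq_of_forall_le E H hC] at hc
      have hhc := commutatorElement_mem_upperCent_comm (hc.2 h hh)
      rwa [upperCent_eq_map] at hhc⟩
    refine ⟨E', ?_, hHE', fun n hn =>
      (iterCent_eq_upperCent_of_le H hC hE'E hHE' hE' n hn).1⟩
    rw [env, ← hE, hC k le_rfl, upperCent_eq_map]
    rfl

end

/-- For `i ≤ k`,
`C_(E_k(H))^(i+1)(H) = {x ∈ E_k(H) | [x, h] ∈ Z_i(E_k(H)) for all h ∈ H}`. -/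
theorem iterCent_env_eq {G : Type*} [Group G] (H : Subgroup G) (i k : ℕ) (hik : i ≤ k) :
    iterCent (env (H : Set G) k) (H : Set G) (i + 1) =
      {x | x ∈ env (H : Set G) k ∧ ∀ h ∈ H, ⁅x, h⁆ ∈ upperCent (env (H : Set G) k) i} := by
  obtain ⟨E, hE, -, hC⟩ := exists_subgroup_env H k
  rw [← hE]
  exact iterCent_succ_eq_of_forall_le E H fun m hm => hC m (hm.trans hik)
end

section
/- Let A ≤ B ≤ C be groups and k a natural number such that C_C^j(A) = Z_j(C) for all j ≤ k. Then: (i) C_C^j(A) = C_C^j(B) = Z_j(C) for all j ≤ k; (ii) C_B^j(A) = Z_j(B) = Z_j(C) ∩ B for all j ≤ k; and (iii) C_B^{k+1}(A) = C_C^{k+1}(A) ∩ B. -/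
open scoped commutatorElement

/-!
Since each `Z_n(C)` is normal, the normalizer conditions in the definition of `C_S^{n+1}(A)`
hold automatically for `x ∈ S` once the lower terms are known to be of the form `Z_n(C) ∩ S`;
then `C_S^{n+1}(A)` is just the set of `x ∈ S` with `[x, A] ⊆ Z_n(C)`. The hypothesis says
exactly that, for `n < k`, testing commutators against `A` already cuts out `Z_{n+1}(C)`; testing
against any larger set `X ⊇ A` (such as `B`) gives something between `Z_{n+1}(C)` and that, so
also `Z_{n+1}(C)`. An induction on `j ≤ k` then identifies all the series in question with
`Z_j(C) ∩ S`.
-/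

namespace Subgroup

variable {G : Type*} [Group G]

theorem commutatorElement_mem (S : Subgroup G) {x y : G} (hx : x ∈ S) (hy : y ∈ S) :
    ⁅x, y⁆ ∈ S := by
  rw [commutatorElement_def]
  exact S.mul_mem (S.mul_mem (S.mul_mem hx hy) (S.inv_mem hx)) (S.inv_mem hy)

theorem Normal.conj_mem_iff {N : Subgroup G} (hN : N.Normal) (x g : G) :
    x * g * x⁻¹ ∈ N ↔ g ∈ N := by
  rw [hN.mem_comm_iff, inv_mul_cancel_left]

end Subgroup

section

variable {G : Type*} [Group G]

/-- For normal `T`, the preimage of the centralizer of the image of `A` in `G ⧸ T`. -/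
def relCentralizer (T A : Set G) : Set G :=
  {x | ∀ a ∈ A, ⁅x, a⁆ ∈ T}

theorem relCentralizer_antitone (T : Set G) : Antitone (relCentralizer T) :=
  fun _ _ hAX _ hx a ha => hx a (hAX ha)

theorem upperCent_univ_eq_upperCentralSeries (n : ℕ) :
    upperCent (Set.univ : Set G) n = Subgroup.upperCentralSeries G n := by
  induction n with
  | zero => simp [upperCent]
  | succ n ih =>
    ext x
    simp [upperCent, Subgroup.mem_upperCentralSeries_succ_iff, ih]

theorem conj_mem_upperCent_univ_iff (n : ℕ) (x g : G) :
    x * g * x⁻¹ ∈ upperCent (Set.univ : Set G) n ↔ g ∈ upperCent (Set.univ : Set G) n := by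
  rw [upperCent_univ_eq_upperCentralSeries, SetLike.mem_coe, SetLike.mem_coe]
  exact Subgroup.Normal.conj_mem_iff inferInstance x g

theorem upperCent_univ_succ_subset_relCentralizer (n : ℕ) (A : Set G) :
    upperCent (Set.univ : Set G) (n + 1) ⊆ relCentralizer (upperCent Set.univ n) A :=
  fun _ hx a _ => hx.2 a trivial

theorem iterCent_succ_of_eq_upperCent_inter (S : Subgroup G) {A : Set G} (hA : A ⊆ S) {j : ℕ}
    (h : ∀ n ≤ j, iterCent (S : Set G) A n = upperCent Set.univ n ∩ S) :
    iterCent (S : Set G) A (j + 1) = relCentralizer (upperCent Set.univ j) A ∩ S := by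
  ext x
  rw [iterCent]
  constructor
  · rintro ⟨hxS, -, hcomm⟩
    exact ⟨fun a ha => ((h j le_rfl).subset (hcomm a ha)).1, hxS⟩
  · rintro ⟨hcomm, hxS⟩
    refine ⟨hxS, fun n hn g hg => ?_, fun a ha => ?_⟩
    · rw [h n hn, Set.mem_inter_iff, Set.mem_inter_iff]
      exact and_congr (conj_mem_upperCent_univ_iff n x g)
        (iff_of_true (S.mul_mem (S.mul_mem hxS hg) (S.inv_mem hxS)) hg)
    · rw [h j le_rfl]
      exact ⟨hcomm a ha, S.commutatorElement_mem hxS (hA ha)⟩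

theorem iterCent_univ_succ_of_eq_upperCent {A : Set G} {j : ℕ}
    (h : ∀ n ≤ j, iterCent (Set.univ : Set G) A n = upperCent Set.univ n) :
    iterCent (Set.univ : Set G) A (j + 1) = relCentralizer (upperCent Set.univ j) A := by
  simpa using iterCent_succ_of_eq_upperCent_inter ⊤ (Set.subset_univ A) (by simpa using h)

theorem iterCent_eq_upperCent_inter (S : Subgroup G) {A : Set G} (hA : A ⊆ S) {k : ℕ}
    (hZ : ∀ n < k, relCentralizer (upperCent Set.univ n) A ⊆ upperCent Set.univ (n + 1)) :
    ∀ j ≤ k, iterCent (S : Set G) A j = upperCent Set.univ j ∩ S := by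
  intro j hj
  induction j using Nat.strong_induction_on with
  | _ j ih =>
    rcases j with _ | j
    · rw [iterCent, upperCent, Set.singleton_inter_of_mem S.one_mem]
    · rw [iterCent_succ_of_eq_upperCent_inter S hA fun n hn => ih n (by omega) (by omega),
        (hZ j hj).antisymm (upperCent_univ_succ_subset_relCentralizer j A)]

theorem upperCent_eq_upperCent_inter (S : Subgroup G) {k : ℕ}
    (hZ : ∀ n < k,
      relCentralizer (upperCent Set.univ n) (S : Set G) ⊆ upperCent Set.univ (n + 1)) :
    ∀ j ≤ k, upperCent (S : Set G) j = upperCent Set.univ j ∩ S := by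
  intro j hj
  induction j with
  | zero => rw [upperCent, upperCent, Set.singleton_inter_of_mem S.one_mem]
  | succ j ih =>
    rw [← (hZ j hj).antisymm (upperCent_univ_succ_subset_relCentralizer j (S : Set G))]
    ext x
    simp only [upperCent, ih (by omega), Set.mem_ofPred_eq, Set.mem_inter_iff]
    exact ⟨fun ⟨hxS, hcomm⟩ => ⟨fun g hg => (hcomm g hg).1, hxS⟩,
      fun ⟨hcomm, hxS⟩ => ⟨hxS, fun g hg => ⟨hcomm g hg, S.commutatorElement_mem hxS hg⟩⟩⟩

theorem relCentralizer_subset_upperCent_of_iterCent_eq {A : Set G} {k : ℕ}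
    (h : ∀ j ≤ k, iterCent (Set.univ : Set G) A j = upperCent Set.univ j) :
    ∀ n < k, relCentralizer (upperCent Set.univ n) A ⊆ upperCent Set.univ (n + 1) := by
  intro n hn
  rw [← h (n + 1) hn, iterCent_univ_succ_of_eq_upperCent fun m hm => h m (by omega)]

end

/-- Let `A ≤ B ≤ C` be groups and `k` such that `C_C^j(A) = Z_j(C)` for all `j ≤ k`.
Then (i) `C_C^j(A) = C_C^j(B) = Z_j(C)` for `j ≤ k`;
(ii) `C_B^j(A) = Z_j(B) = Z_j(C) ∩ B` for `j ≤ k`;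
(iii) `C_B^(k+1)(A) = C_C^(k+1)(A) ∩ B`. -/
theorem iterCent_of_eq_upperCent {C : Type*} [Group C] (A B : Subgroup C) (hAB : A ≤ B)
    (k : ℕ) (h : ∀ j ≤ k, iterCent (Set.univ : Set C) (A : Set C) j =
      upperCent (Set.univ : Set C) j) :
    (∀ j ≤ k, iterCent (Set.univ : Set C) (A : Set C) j =
        iterCent (Set.univ : Set C) (B : Set C) j ∧
      iterCent (Set.univ : Set C) (B : Set C) j = upperCent (Set.univ : Set C) j) ∧
    (∀ j ≤ k, iterCent (B : Set C) (A : Set C) j = upperCent (B : Set C) j ∧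
      upperCent (B : Set C) j = upperCent (Set.univ : Set C) j ∩ (B : Set C)) ∧
    iterCent (B : Set C) (A : Set C) (k + 1) =
      iterCent (Set.univ : Set C) (A : Set C) (k + 1) ∩ (B : Set C) := by
  have hZA := relCentralizer_subset_upperCent_of_iterCent_eq h
  have hZB : ∀ n < k, relCentralizer (upperCent Set.univ n) (B : Set C) ⊆
      upperCent Set.univ (n + 1) :=
    fun n hn => (relCentralizer_antitone _ (show (A : Set C) ⊆ B from hAB)).trans (hZA n hn)
  have hCB : ∀ j ≤ k, iterCent (Set.univ : Set C) (B : Set C) j = upperCent Set.univ j := by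
    simpa using iterCent_eq_upperCent_inter ⊤ (Set.subset_univ _) hZB
  have hBA := iterCent_eq_upperCent_inter B hAB hZA
  have hUB := upperCent_eq_upperCent_inter B hZB
  refine ⟨fun j hj => ⟨(h j hj).trans (hCB j hj).symm, hCB j hj⟩,
    fun j hj => ⟨(hBA j hj).trans (hUB j hj).symm, hUB j hj⟩, ?_⟩
  rw [iterCent_succ_of_eq_upperCent_inter B hAB hBA, iterCent_univ_succ_of_eq_upperCent h]
end
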